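/- arXiv:2410.00677 — 3 statements merged into one kernel-verified Lean document; each statement's English description precedes it below -/
import Mathlib

section
/- Let d ≥ 1, ℓ ∈ ℕ and α ≥ 0. There is a constant C = C(d, ℓ, α) such that for all t > 0 and all x ∈ ℝ^d, |x|^α · |Δ^ℓ q_t(x)| ≤ C · t^{α/2 - ℓ} · q_{2t}(x). -/
open MeasureTheory Real
open scoped ENNReal NNReal
noncomputable section

abbrev Esp (d : ℕ) := EuclideanSpace ℝ (Fin d)

/-- Partial derivative in direction `i`. -/
def pderiv (d : ℕ) (i : Fin d) (f : Esp d → ℝ) : Esp d → ℝ :=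
  fun x => fderiv ℝ f x (EuclideanSpace.single i 1)

/-- Laplacian `Δ f = ∑ i ∂²f/∂x_i²`. -/
def laplacian (d : ℕ) (f : Esp d → ℝ) : Esp d → ℝ :=
  fun x => ∑ i : Fin d, pderiv d i (pderiv d i f) x

/-- Heat kernel on ℝ^d: `q_t(x) = (4πt)^{-d/2} exp(-|x|²/(4t))`. -/
def heatKernel (d : ℕ) (t : ℝ) (x : Esp d) : ℝ :=
  (4 * π * t) ^ (-(d : ℝ) / 2) * Real.exp (-‖x‖ ^ 2 / (4 * t))

/-!
By the radial formula `Δ g(‖x‖²) = 4‖x‖² g''(‖x‖²) + 2d g'(‖x‖²)`, each Laplacian applied to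
`c · P(‖x‖²/t) e^{-‖x‖²/(4t)}` returns a function of the same shape with an extra factor `t⁻¹`, so
`Δ^ℓ q_t(x) = (4πt)^{-d/2} t^{-ℓ} P_ℓ(u) e^{-u/4}` with `u = ‖x‖²/t` and a polynomial `P_ℓ`.
Since `‖x‖^α = t^{α/2} u^{α/2}`, the bound reduces to `u^{α/2} |P_ℓ(u)| ≤ C e^{u/8}`, because
`q_{2t}(x) = 2^{-d/2} (4πt)^{-d/2} e^{-u/8}`.
-/

open Polynomial
open scoped Nat

section RadialLaplacian

variable {d : ℕ} {g g' g'' : ℝ → ℝ}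

lemma hasFDerivAt_comp_norm_sq (hg : ∀ s, HasDerivAt g (g' s) s) (x : Esp d) :
    HasFDerivAt (fun x : Esp d => g (‖x‖ ^ 2)) (g' (‖x‖ ^ 2) • (2 • innerSL ℝ x)) x :=
  (hg _).comp_hasFDerivAt x (hasStrictFDerivAt_norm_sq x).hasFDerivAt

lemma pderiv_comp_norm_sq (hg : ∀ s, HasDerivAt g (g' s) s) (i : Fin d) :
    pderiv d i (fun x => g (‖x‖ ^ 2)) = fun x => g' (‖x‖ ^ 2) * (2 * x i) := by
  funext x
  simp [pderiv, (hasFDerivAt_comp_norm_sq hg x).fderiv, EuclideanSpace.inner_single_right]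

lemma laplacian_comp_norm_sq (hg : ∀ s, HasDerivAt g (g' s) s)
    (hg' : ∀ s, HasDerivAt g' (g'' s) s) (x : Esp d) :
    laplacian d (fun x => g (‖x‖ ^ 2)) x = 4 * ‖x‖ ^ 2 * g'' (‖x‖ ^ 2) + 2 * d * g' (‖x‖ ^ 2) := by
  have hsecond (i : Fin d) : pderiv d i (pderiv d i fun x => g (‖x‖ ^ 2)) x
      = 4 * g'' (‖x‖ ^ 2) * x i ^ 2 + 2 * g' (‖x‖ ^ 2) := by
    have h := (hasFDerivAt_comp_norm_sq hg' x).mul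
      ((EuclideanSpace.proj i : Esp d →L[ℝ] ℝ).hasFDerivAt.const_mul 2)
    rw [pderiv_comp_norm_sq hg, pderiv,
      HasFDerivAt.fderiv (f := fun x : Esp d => g' (‖x‖ ^ 2) * (2 * x i)) h]
    simp only [PiLp.proj_apply, add_apply, smul_apply,
      PiLp.single_eq_same, smul_eq_mul, mul_one, coe_innerSL_apply,
      EuclideanSpace.inner_single_right, ringHom_apply, one_mul, nsmul_eq_mul, Nat.cast_ofNat]
    ring
  rw [laplacian, Finset.sum_congr rfl fun i _ => hsecond i, Finset.sum_add_distrib,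
    ← Finset.mul_sum, ← EuclideanSpace.real_norm_sq_eq]
  simp only [Finset.sum_const, Finset.card_univ, Fintype.card_fin, nsmul_eq_mul]
  ring

end RadialLaplacian

section HeatProfile

def heatProfile (t : ℝ) (P : ℝ[X]) (s : ℝ) : ℝ :=
  P.eval (s / t) * exp (-s / (4 * t))

def heatProfileDeriv (P : ℝ[X]) : ℝ[X] :=
  derivative P - C 4⁻¹ * P

/-- The radial Laplacian `g ↦ 4 s g'' + 2 d g'` of `laplacian_comp_norm_sq`, acting on the
polynomial factor of a heat profile (the extra `X` absorbs one factor `s / t`). -/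
def heatProfileLaplacian (d : ℕ) (P : ℝ[X]) : ℝ[X] :=
  4 * X * heatProfileDeriv (heatProfileDeriv P) + C (2 * (d : ℝ)) * heatProfileDeriv P

variable {t : ℝ}

lemma hasDerivAt_heatProfile (P : ℝ[X]) (s : ℝ) :
    HasDerivAt (heatProfile t P) (t⁻¹ * heatProfile t (heatProfileDeriv P) s) s := by
  have hpoly : HasDerivAt (fun s => P.eval (s / t)) ((derivative P).eval (s / t) * t⁻¹) s := by
    simpa [div_eq_mul_inv, Function.comp_def] using
      (P.hasDerivAt (s / t)).comp s ((hasDerivAt_id s).div_const t)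
  have hexp : HasDerivAt (fun s => exp (-s / (4 * t))) (exp (-s / (4 * t)) * -(4 * t)⁻¹) s := by
    simpa [div_eq_mul_inv] using ((hasDerivAt_id s).neg.div_const (4 * t)).exp
  refine (hpoly.mul hexp).congr_deriv ?_
  simp only [heatProfile, heatProfileDeriv, eval_sub, eval_mul, eval_C]
  ring

lemma laplacian_const_mul_heatProfile (d : ℕ) (c : ℝ) (P : ℝ[X]) :
    laplacian d (fun x => c * heatProfile t P (‖x‖ ^ 2))
      = fun x => c * t⁻¹ * heatProfile t (heatProfileLaplacian d P) (‖x‖ ^ 2) := by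
  funext x
  rw [laplacian_comp_norm_sq (fun s => (hasDerivAt_heatProfile P s).const_mul c)
    (fun s => ((hasDerivAt_heatProfile _ s).const_mul t⁻¹).const_mul c)]
  simp only [heatProfile, heatProfileLaplacian, eval_add, eval_mul, eval_C, eval_X, eval_ofNat]
  ring

lemma iterate_laplacian_heatKernel (d : ℕ) (ℓ : ℕ) :
    (laplacian d)^[ℓ] (heatKernel d t) = fun x =>
      (4 * π * t) ^ (-(d : ℝ) / 2) * t⁻¹ ^ ℓ *
        heatProfile t ((heatProfileLaplacian d)^[ℓ] 1) (‖x‖ ^ 2) := by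
  induction ℓ with
  | zero => funext x; simp [heatKernel, heatProfile]
  | succ ℓ ih =>
    rw [Function.iterate_succ_apply', ih, laplacian_const_mul_heatProfile d,
      Function.iterate_succ_apply']
    simp only [pow_succ, mul_assoc]

lemma heatProfile_eq (t : ℝ) (P : ℝ[X]) (s : ℝ) :
    heatProfile t P s = P.eval (s / t) * exp (-(s / t) / 4) := by
  rw [heatProfile]
  ring_nf

end HeatProfile

section PolynomialGrowth

variable {c u : ℝ}

lemma pow_le_factorial_div_pow_mul_exp (k : ℕ) (hc : 0 < c) (hu : 0 ≤ u) :
    u ^ k ≤ k ! / c ^ k * exp (c * u) := by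
  have h := Real.pow_div_factorial_le_exp (x := c * u) (by positivity) k
  rw [mul_pow, div_le_iff₀ (by positivity)] at h
  rw [div_mul_eq_mul_div, le_div_iff₀ (by positivity)]
  linarith

lemma exists_abs_eval_le_mul_exp (P : ℝ[X]) (hc : 0 < c) :
    ∃ C > 0, ∀ u ≥ 0, |P.eval u| ≤ C * exp (c * u) := by
  set B := ∑ k ∈ Finset.range (P.natDegree + 1), |P.coeff k| * (k ! / c ^ k)
  have hB : 0 ≤ B := Finset.sum_nonneg fun k _ => by positivity
  refine ⟨B + 1, by positivity, fun u hu => ?_⟩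
  calc |P.eval u| ≤ ∑ k ∈ Finset.range (P.natDegree + 1), |P.coeff k| * u ^ k := by
        rw [eval_eq_sum_range]
        refine (Finset.abs_sum_le_sum_abs _ _).trans_eq ?_
        simp only [abs_mul, abs_pow, abs_of_nonneg hu]
    _ ≤ B * exp (c * u) := by
        rw [Finset.sum_mul]
        refine Finset.sum_le_sum fun k _ => ?_
        rw [mul_assoc]
        exact mul_le_mul_of_nonneg_left (pow_le_factorial_div_pow_mul_exp k hc hu) (abs_nonneg _)
    _ ≤ (B + 1) * exp (c * u) := by gcongr; linarith

lemma exists_rpow_mul_abs_eval_le_mul_exp (P : ℝ[X]) {β : ℝ} (hβ : 0 ≤ β) (hc : 0 < c) :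
    ∃ C > 0, ∀ u ≥ 0, u ^ β * |P.eval u| ≤ C * exp (c * u) := by
  obtain ⟨C, hC, hP⟩ := exists_abs_eval_le_mul_exp ((1 + X) ^ ⌈β⌉₊ * P) hc
  refine ⟨C, hC, fun u hu => le_trans ?_ (hP u hu)⟩
  have hpow : u ^ β ≤ (1 + u) ^ ⌈β⌉₊ := calc
    u ^ β ≤ (1 + u) ^ β := by gcongr; linarith
    _ ≤ (1 + u) ^ (⌈β⌉₊ : ℝ) := by gcongr; linarith; exact Nat.le_ceil β
    _ = (1 + u) ^ ⌈β⌉₊ := rpow_natCast _ _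
  rw [eval_mul, abs_mul, eval_pow, eval_add, eval_one, eval_X,
    abs_of_nonneg (by positivity : 0 ≤ (1 + u) ^ ⌈β⌉₊)]
  gcongr

end PolynomialGrowth

lemma heatKernel_two_mul (d : ℕ) {t : ℝ} (ht : 0 < t) (x : Esp d) :
    heatKernel d (2 * t) x =
      2 ^ (-(d : ℝ) / 2) * (4 * π * t) ^ (-(d : ℝ) / 2) * exp (-(‖x‖ ^ 2 / t) / 8) := by
  rw [heatKernel, show 4 * π * (2 * t) = 2 * (4 * π * t) by ring,
    mul_rpow zero_le_two (by positivity)]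
  congr 2
  field_simp
  ring

lemma norm_rpow_mul_abs_iterate_laplacian_heatKernel (d ℓ : ℕ) (α : ℝ) {t : ℝ} (ht : 0 < t)
    (x : Esp d) :
    ‖x‖ ^ α * |(laplacian d)^[ℓ] (heatKernel d t) x| =
      t ^ (α / 2 - ℓ) * (4 * π * t) ^ (-(d : ℝ) / 2) *
        ((‖x‖ ^ 2 / t) ^ (α / 2) * |((heatProfileLaplacian d)^[ℓ] 1).eval (‖x‖ ^ 2 / t)|) *
        exp (-(‖x‖ ^ 2 / t) / 4) := by
  have hnorm : ‖x‖ ^ α = t ^ (α / 2) * (‖x‖ ^ 2 / t) ^ (α / 2) := by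
    rw [← mul_rpow ht.le (by positivity), mul_div_cancel₀ _ ht.ne', ← rpow_natCast,
      ← rpow_mul (norm_nonneg x)]
    ring_nf
  simp only [iterate_laplacian_heatKernel, heatProfile_eq]
  rw [hnorm, rpow_sub ht, rpow_natCast, abs_mul,
    abs_mul, abs_mul, abs_of_pos (exp_pos _), abs_of_pos (by positivity : 0 < t⁻¹ ^ ℓ),
    abs_of_pos (by positivity : 0 < (4 * π * t) ^ (-(d : ℝ) / 2)), inv_pow]
  ring

theorem stmt1_general (d : ℕ) (ℓ : ℕ) (α : ℝ) (hα : 0 ≤ α) :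
    ∃ C : ℝ, 0 < C ∧ ∀ t : ℝ, 0 < t → ∀ x : Esp d,
      ‖x‖ ^ α * |((laplacian d)^[ℓ] (heatKernel d t)) x| ≤
        C * t ^ (α / 2 - ℓ) * heatKernel d (2 * t) x := by
  obtain ⟨C, hC, hP⟩ := exists_rpow_mul_abs_eval_le_mul_exp ((heatProfileLaplacian d)^[ℓ] 1)
    (β := α / 2) (c := 1 / 8) (by positivity) (by norm_num)
  refine ⟨2 ^ ((d : ℝ) / 2) * C, by positivity, fun t ht x => ?_⟩
  have htwo : (2 : ℝ) ^ ((d : ℝ) / 2) * 2 ^ (-(d : ℝ) / 2) = 1 := by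
    rw [← rpow_add zero_lt_two]; ring_nf; exact rpow_zero 2
  rw [norm_rpow_mul_abs_iterate_laplacian_heatKernel d ℓ α ht, heatKernel_two_mul d ht]
  set u := ‖x‖ ^ 2 / t
  calc _ ≤ t ^ (α / 2 - ℓ) * (4 * π * t) ^ (-(d : ℝ) / 2) * (C * exp (1 / 8 * u)) *
        exp (-u / 4) := by have := hP u (by positivity); gcongr
    _ = 2 ^ ((d : ℝ) / 2) * 2 ^ (-(d : ℝ) / 2) * C * t ^ (α / 2 - ℓ) *
        ((4 * π * t) ^ (-(d : ℝ) / 2) * exp (1 / 8 * u + -u / 4)) := by rw [htwo, exp_add]; ring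
    _ = _ := by ring_nf

/-- Heat kernel bound: `|x|^α |Δ^ℓ q_t(x)| ≤ C t^{α/2-ℓ} q_{2t}(x)`. -/
theorem stmt1 (d : ℕ) (hd : 1 ≤ d) (ℓ : ℕ) (α : ℝ) (hα : 0 ≤ α) :
    ∃ C : ℝ, 0 < C ∧ ∀ t : ℝ, 0 < t → ∀ x : Esp d,
      ‖x‖ ^ α * |((laplacian d)^[ℓ] (heatKernel d t)) x| ≤
        C * t ^ (α / 2 - ℓ) * heatKernel d (2 * t) x :=
  stmt1_general d ℓ α hα
end
end

section
/- Let d ≥ 1, p ∈ [1,∞], 0 ≤ α ≤ 1, x₀ ∈ ℝ^d, and let ϑ : ℝ^d → ℝ be continuously differentiable with |ϑ(x)| ≤ M and |∇ϑ(x)| ≤ L for all x. Define, for 0 < δ ≤ 1 and smooth compactly supported φ : ℝ^d → ℝ, the function (Δ_{ϑ,δ}φ)(x) = ϑ(δx + x₀) Δφ(x) + δ ∇ϑ(δx + x₀)·∇φ(x). Then there is a constant C = C(M, L, α, d) such that ‖ Δ_{ϑ,δ}φ − ϑ(x₀) Δφ ‖_{L^p(ℝ^d)} ≤ C δ^α ‖φ‖_{W̄^{2,p}_α}.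 -/
/-!
Write the error as `(ϑ(δx + x₀) - ϑ(x₀)) Δφ(x) + δ ∇ϑ(δx + x₀) · ∇φ(x)`. The oscillation of `ϑ`
is at most `min (2M) (L δ |x|) ≤ (2M)^(1-α) (L δ |x|)^α`, so the first term is bounded by
a multiple of `δ^α ∑ᵢ |x|^α |∂ᵢ²φ|`, and since `δ ≤ δ^α` the second by a multiple of
`δ^α ∑ᵢ |∂ᵢφ|`. Minkowski's inequality in `L^p` then bounds the error by `δ^α` times `2d` terms,
each dominated by the weighted Sobolev norm.
-/

open MeasureTheory Real
open scoped ENNReal NNReal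
noncomputable section

/-- Multi-index partial derivative `∂_γ f`. -/
def mderiv (d : ℕ) (γ : Fin d → ℕ) (f : Esp d → ℝ) : Esp d → ℝ :=
  (List.finRange d).foldr (fun i g => (pderiv d i)^[γ i] g) f

/-- Weighted Sobolev norm
`‖f‖_{W̄^{k,p}_α} = ∑_{|γ| ≤ k} (‖∂_γ f‖_{L^p} + ‖|x|^α ∂_γ f‖_{L^p})`. -/
def wSobolevNorm (d k : ℕ) (p : ℝ≥0∞) (α : ℝ) (f : Esp d → ℝ) : ℝ≥0∞ :=
  ∑ γ : (Fin d → Fin (k + 1)),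
    if (∑ i, (γ i : ℕ)) ≤ k then
      eLpNorm (mderiv d (fun i => (γ i : ℕ)) f) p volume
        + eLpNorm (fun x => ‖x‖ ^ α * mderiv d (fun i => (γ i : ℕ)) f x) p volume
    else 0

/-- The localized divergence-form operator
`(Δ_{ϑ,δ}φ)(x) = ϑ(δx+x₀) Δφ(x) + δ ∇ϑ(δx+x₀)·∇φ(x)`. -/
def locDiffOp (d : ℕ) (ϑ : Esp d → ℝ) (x₀ : Esp d) (δ : ℝ) (φ : Esp d → ℝ) : Esp d → ℝ :=
  fun x => ϑ (δ • x + x₀) * laplacian d φ x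
    + δ * (inner ℝ (gradient ϑ (δ • x + x₀)) (gradient φ x) : ℝ)

lemma Real.min_le_rpow_mul_rpow {a b α : ℝ} (ha : 0 ≤ a) (hb : 0 ≤ b) (hα0 : 0 ≤ α)
    (hα1 : α ≤ 1) : min a b ≤ a ^ (1 - α) * b ^ α := by
  have hc_eq (c : ℝ) (hc : 0 ≤ c) : c = c ^ (1 - α) * c ^ α := by
    rw [← Real.rpow_add' hc (by norm_num), sub_add_cancel, Real.rpow_one]
  rcases le_total a b with hab | hba
  · calc min a b = a ^ (1 - α) * a ^ α := by rw [min_eq_left hab, ← hc_eq a ha]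
      _ ≤ a ^ (1 - α) * b ^ α := by gcongr
  · calc min a b = b ^ (1 - α) * b ^ α := by rw [min_eq_right hba, ← hc_eq b hb]
      _ ≤ a ^ (1 - α) * b ^ α := by gcongr

lemma abs_sub_le_rpow_of_abs_le_of_lipschitz {X : Type*} [PseudoMetricSpace X] {f : X → ℝ}
    {M L α : ℝ} (hM : ∀ x, |f x| ≤ M) (hL : 0 ≤ L) (hf : ∀ x y, |f x - f y| ≤ L * dist x y)
    (hα0 : 0 ≤ α) (hα1 : α ≤ 1) (x y : X) :
    |f x - f y| ≤ (2 * M) ^ (1 - α) * L ^ α * dist x y ^ α := by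
  have hM0 : 0 ≤ M := (abs_nonneg _).trans (hM x)
  have hbdd : |f x - f y| ≤ 2 * M := by
    linarith [abs_sub (f x) (f y), hM x, hM y]
  calc |f x - f y| ≤ min (2 * M) (L * dist x y) := le_min hbdd (hf x y)
    _ ≤ (2 * M) ^ (1 - α) * (L * dist x y) ^ α :=
      Real.min_le_rpow_mul_rpow (by positivity) (by positivity) hα0 hα1
    _ = (2 * M) ^ (1 - α) * L ^ α * dist x y ^ α := by
      rw [Real.mul_rpow hL dist_nonneg, mul_assoc]

section Gradient

variable {F : Type*} [NormedAddCommGroup F] [InnerProductSpace ℝ F] [CompleteSpace F]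

lemma norm_gradient_eq_norm_fderiv (f : F → ℝ) (x : F) : ‖gradient f x‖ = ‖fderiv ℝ f x‖ :=
  (InnerProductSpace.toDual ℝ F).symm.norm_map _

lemma abs_sub_le_of_norm_gradient_le {f : F → ℝ} {L : ℝ} (hf : Differentiable ℝ f)
    (hL : ∀ x, ‖gradient f x‖ ≤ L) (x y : F) : |f x - f y| ≤ L * dist x y := by
  have := convex_univ.norm_image_sub_le_of_norm_fderiv_le (fun z _ => hf z)
    (fun z _ => (norm_gradient_eq_norm_fderiv f z).symm ▸ hL z) (Set.mem_univ y) (Set.mem_univ x)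
  rwa [Real.norm_eq_abs, ← dist_eq_norm] at this

end Gradient

lemma EuclideanSpace.abs_inner_le_norm_mul_sum_abs {ι : Type*} [Fintype ι]
    (u w : EuclideanSpace ℝ ι) : |inner ℝ u w| ≤ ‖u‖ * ∑ i, |w i| := by
  rw [PiLp.inner_apply, Finset.mul_sum]
  refine (Finset.abs_sum_le_sum_abs _ _).trans (Finset.sum_le_sum fun i _ => ?_)
  rw [Real.inner_apply, abs_mul]
  exact mul_le_mul_of_nonneg_right (PiLp.norm_apply_le u i) (abs_nonneg _)

section LpBound

variable {X ι : Type*} [MeasurableSpace X] {μ : Measure X} {p : ℝ≥0∞}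

lemma eLpNorm_le_ofReal_mul_sum_of_abs_le (hp : 1 ≤ p) {s : Finset ι} {f : X → ℝ}
    {g : ι → X → ℝ} (hg : ∀ i ∈ s, AEStronglyMeasurable (g i) μ) {c : ℝ} (hc : 0 ≤ c)
    (hfg : ∀ x, |f x| ≤ c * ∑ i ∈ s, |g i x|) :
    eLpNorm f p μ ≤ ENNReal.ofReal c * ∑ i ∈ s, eLpNorm (g i) p μ := by
  calc eLpNorm f p μ ≤ eLpNorm (c • ∑ i ∈ s, fun x => ‖g i x‖) p μ :=
        eLpNorm_mono_real fun x => by simpa [Finset.sum_apply] using hfg x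
    _ = ENNReal.ofReal c * eLpNorm (∑ i ∈ s, fun x => ‖g i x‖) p μ := by
        rw [eLpNorm_const_smul, Real.enorm_eq_ofReal hc]
    _ ≤ ENNReal.ofReal c * ∑ i ∈ s, eLpNorm (fun x => ‖g i x‖) p μ := by
        gcongr
        exact eLpNorm_sum_le (fun i hi => (hg i hi).norm) hp
    _ = ENNReal.ofReal c * ∑ i ∈ s, eLpNorm (g i) p μ := by
        simp only [eLpNorm_norm]

end LpBound

section PartialDerivatives

variable {d : ℕ}

lemma gradient_apply_eq_pderiv (f : Esp d → ℝ) (x : Esp d) (i : Fin d) :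
    gradient f x i = pderiv d i f x := by
  have h := inner_gradient_left (f := f) (x := x) (y := EuclideanSpace.single i (1 : ℝ))
  rwa [EuclideanSpace.inner_single_right, one_mul, conj_trivial] at h

lemma contDiff_pderiv (i : Fin d) {f : Esp d → ℝ} (hf : ContDiff ℝ (⊤ : ℕ∞) f) :
    ContDiff ℝ (⊤ : ℕ∞) (pderiv d i f) :=
  (hf.fderiv_right (m := (⊤ : ℕ∞)) (by exact_mod_cast le_top)).clm_apply contDiff_const

lemma foldr_iterate_pderiv_pi_single (i : Fin d) (n : ℕ) (f : Esp d → ℝ) {l : List (Fin d)}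
    (hl : l.Nodup) :
    l.foldr (fun j g => (pderiv d j)^[(Pi.single i n : Fin d → ℕ) j] g) f
      = if i ∈ l then (pderiv d i)^[n] f else f := by
  induction l with
  | nil => simp
  | cons j t ih =>
    obtain ⟨hjt, ht⟩ := List.nodup_cons.mp hl
    rw [List.foldr_cons, ih ht]
    by_cases hji : j = i
    · subst hji
      simp [hjt]
    · simp [hji, Ne.symm hji]

lemma mderiv_pi_single (i : Fin d) (n : ℕ) (f : Esp d → ℝ) :
    mderiv d (Pi.single i n) f = (pderiv d i)^[n] f := by
  rw [mderiv, foldr_iterate_pderiv_pi_single i n f (List.nodup_finRange d),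
    if_pos (List.mem_finRange i)]

lemma eLpNorm_iterate_pderiv_add_le_wSobolevNorm {k n : ℕ} (hn : n ≤ k) (p : ℝ≥0∞) (α : ℝ)
    (φ : Esp d → ℝ) (i : Fin d) :
    eLpNorm ((pderiv d i)^[n] φ) p volume
      + eLpNorm (fun x => ‖x‖ ^ α * (pderiv d i)^[n] φ x) p volume ≤ wSobolevNorm d k p α φ := by
  set γ : Fin d → Fin (k + 1) := Pi.single i ⟨n, by omega⟩
  have hγ : (fun j => (γ j : ℕ)) = Pi.single i n := by
    ext j
    by_cases hji : j = i
    · subst hji; simp [γ]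
    · simp [γ, hji]
  have hγk : ∑ j, (Pi.single i n : Fin d → ℕ) j ≤ k := by
    simpa using hn
  have := Finset.single_le_sum (f := fun γ : Fin d → Fin (k + 1) =>
      if (∑ j, (γ j : ℕ)) ≤ k then
        eLpNorm (mderiv d (fun j => (γ j : ℕ)) φ) p volume
          + eLpNorm (fun x => ‖x‖ ^ α * mderiv d (fun j => (γ j : ℕ)) φ x) p volume
      else 0) (fun _ _ => zero_le) (Finset.mem_univ γ)
  rw [hγ, mderiv_pi_single, if_pos hγk] at this
  exact this

end PartialDerivatives

section LocalizedOperator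

variable {d : ℕ}

def weightedDerivTerms (d : ℕ) (α : ℝ) (φ : Esp d → ℝ) : Fin d ⊕ Fin d → Esp d → ℝ :=
  Sum.elim (fun i x => ‖x‖ ^ α * pderiv d i (pderiv d i φ) x) (fun i => pderiv d i φ)

lemma eLpNorm_weightedDerivTerms_le (p : ℝ≥0∞) (α : ℝ) (φ : Esp d → ℝ) (j : Fin d ⊕ Fin d) :
    eLpNorm (weightedDerivTerms d α φ j) p volume ≤ wSobolevNorm d 2 p α φ := by
  rcases j with i | i
  · exact le_add_self.trans (eLpNorm_iterate_pderiv_add_le_wSobolevNorm (n := 2) le_rfl p α φ i)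
  · exact le_self_add.trans (eLpNorm_iterate_pderiv_add_le_wSobolevNorm (n := 1) one_le_two p α φ i)

lemma continuous_weightedDerivTerms {α : ℝ} (hα : 0 ≤ α) {φ : Esp d → ℝ}
    (hφ : ContDiff ℝ (⊤ : ℕ∞) φ) (j : Fin d ⊕ Fin d) : Continuous (weightedDerivTerms d α φ j) := by
  rcases j with i | i
  · exact ((Real.continuous_rpow_const hα).comp continuous_norm).mul
      (contDiff_pderiv i (contDiff_pderiv i hφ)).continuous
  · exact (contDiff_pderiv i hφ).continuous

lemma abs_locDiffOp_sub_le (ϑ : Esp d → ℝ) (x₀ : Esp d) {δ : ℝ} (hδ : 0 ≤ δ)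
    (φ : Esp d → ℝ) (x : Esp d) :
    |locDiffOp d ϑ x₀ δ φ x - ϑ x₀ * laplacian d φ x|
      ≤ |ϑ (δ • x + x₀) - ϑ x₀| * ∑ i, |pderiv d i (pderiv d i φ) x|
        + δ * (‖gradient ϑ (δ • x + x₀)‖ * ∑ i, |pderiv d i φ x|) := by
  have hsplit : locDiffOp d ϑ x₀ δ φ x - ϑ x₀ * laplacian d φ x
      = (ϑ (δ • x + x₀) - ϑ x₀) * laplacian d φ x
        + δ * inner ℝ (gradient ϑ (δ • x + x₀)) (gradient φ x) := by
    rw [locDiffOp]; ring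
  have hlap : |laplacian d φ x| ≤ ∑ i, |pderiv d i (pderiv d i φ) x| :=
    Finset.abs_sum_le_sum_abs _ _
  have hinner : |inner ℝ (gradient ϑ (δ • x + x₀)) (gradient φ x)|
      ≤ ‖gradient ϑ (δ • x + x₀)‖ * ∑ i, |pderiv d i φ x| := by
    simpa only [gradient_apply_eq_pderiv] using
      EuclideanSpace.abs_inner_le_norm_mul_sum_abs (gradient ϑ (δ • x + x₀)) (gradient φ x)
  rw [hsplit]
  refine (abs_add_le _ _).trans ?_
  rw [abs_mul, abs_mul, abs_of_nonneg hδ]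
  gcongr

lemma abs_locDiffOp_sub_le_rpow {α : ℝ} (hα0 : 0 ≤ α) (hα1 : α ≤ 1) (x₀ : Esp d)
    {ϑ : Esp d → ℝ} (hϑ : Differentiable ℝ ϑ) {M L : ℝ} (hM : ∀ x, |ϑ x| ≤ M)
    (hL : ∀ x, ‖gradient ϑ x‖ ≤ L) {δ : ℝ} (hδ0 : 0 < δ) (hδ1 : δ ≤ 1) (φ : Esp d → ℝ)
    (x : Esp d) :
    |locDiffOp d ϑ x₀ δ φ x - ϑ x₀ * laplacian d φ x|
      ≤ ((2 * M) ^ (1 - α) * L ^ α + L) * δ ^ α * ∑ j, |weightedDerivTerms d α φ j x| := by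
  have hL0 : 0 ≤ L := (norm_nonneg _).trans (hL x)
  set A := (2 * M) ^ (1 - α) * L ^ α
  have hA : 0 ≤ A := by
    have hM0 : 0 ≤ M := (abs_nonneg _).trans (hM x)
    positivity
  have hosc : |ϑ (δ • x + x₀) - ϑ x₀| ≤ A * (δ ^ α * ‖x‖ ^ α) := by
    have := abs_sub_le_rpow_of_abs_le_of_lipschitz hM hL0 (abs_sub_le_of_norm_gradient_le hϑ hL)
      hα0 hα1 (δ • x + x₀) x₀
    rwa [dist_add_self_left, norm_smul, Real.norm_of_nonneg hδ0.le,
      Real.mul_rpow hδ0.le (norm_nonneg x)] at this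
  have hδα : δ ≤ δ ^ α := by
    simpa using Real.rpow_le_rpow_of_exponent_ge hδ0 hδ1 hα1
  set S₂ := ∑ i, ‖x‖ ^ α * |pderiv d i (pderiv d i φ) x|
  set S₁ := ∑ i, |pderiv d i φ x|
  have hS₂ : ‖x‖ ^ α * ∑ i, |pderiv d i (pderiv d i φ) x| = S₂ := Finset.mul_sum _ _ _
  have hterms : ∑ j, |weightedDerivTerms d α φ j x| = S₂ + S₁ := by
    simp [weightedDerivTerms, Fintype.sum_sum_type, S₂, S₁, abs_mul,
      abs_of_nonneg (Real.rpow_nonneg (norm_nonneg x) α)]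
  have hS₁0 : 0 ≤ S₁ := by positivity
  have hS₂0 : 0 ≤ S₂ := by positivity
  calc |locDiffOp d ϑ x₀ δ φ x - ϑ x₀ * laplacian d φ x|
      ≤ |ϑ (δ • x + x₀) - ϑ x₀| * ∑ i, |pderiv d i (pderiv d i φ) x|
        + δ * (‖gradient ϑ (δ • x + x₀)‖ * S₁) := abs_locDiffOp_sub_le ϑ x₀ hδ0.le φ x
    _ ≤ A * (δ ^ α * ‖x‖ ^ α) * ∑ i, |pderiv d i (pderiv d i φ) x| + δ ^ α * (L * S₁) := by
      gcongr
      exact hL _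
    _ = A * δ ^ α * S₂ + L * δ ^ α * S₁ := by rw [← hS₂]; ring
    _ ≤ (A + L) * δ ^ α * ∑ j, |weightedDerivTerms d α φ j x| := by
      have hδα0 : 0 ≤ δ ^ α := by positivity
      rw [hterms]
      nlinarith [mul_nonneg (mul_nonneg hA hδα0) hS₁0, mul_nonneg (mul_nonneg hL0 hδα0) hS₂0]

theorem eLpNorm_locDiffOp_sub_le {p : ℝ≥0∞} (hp : 1 ≤ p) {α : ℝ} (hα0 : 0 ≤ α) (hα1 : α ≤ 1)
    (x₀ : Esp d) {ϑ : Esp d → ℝ} (hϑ : Differentiable ℝ ϑ) {M L : ℝ} (hM : ∀ x, |ϑ x| ≤ M)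
    (hL : ∀ x, ‖gradient ϑ x‖ ≤ L) {δ : ℝ} (hδ0 : 0 < δ) (hδ1 : δ ≤ 1) {φ : Esp d → ℝ}
    (hφ : ContDiff ℝ (⊤ : ℕ∞) φ) :
    eLpNorm (fun x => locDiffOp d ϑ x₀ δ φ x - ϑ x₀ * laplacian d φ x) p volume
      ≤ ENNReal.ofReal (2 * d * ((2 * M) ^ (1 - α) * L ^ α + L) * δ ^ α)
        * wSobolevNorm d 2 p α φ := by
  have hM0 : 0 ≤ M := (abs_nonneg _).trans (hM 0)
  have hL0 : 0 ≤ L := (norm_nonneg _).trans (hL 0)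
  set K := (2 * M) ^ (1 - α) * L ^ α + L
  calc eLpNorm (fun x => locDiffOp d ϑ x₀ δ φ x - ϑ x₀ * laplacian d φ x) p volume
      ≤ ENNReal.ofReal (K * δ ^ α) * ∑ j, eLpNorm (weightedDerivTerms d α φ j) p volume :=
        eLpNorm_le_ofReal_mul_sum_of_abs_le hp
          (fun j _ => (continuous_weightedDerivTerms hα0 hφ j).aestronglyMeasurable)
          (by positivity) (abs_locDiffOp_sub_le_rpow hα0 hα1 x₀ hϑ hM hL hδ0 hδ1 φ)
    _ ≤ ENNReal.ofReal (K * δ ^ α) * ∑ _j : Fin d ⊕ Fin d, wSobolevNorm d 2 p α φ := by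
        gcongr with j
        exact eLpNorm_weightedDerivTerms_le p α φ j
    _ = ENNReal.ofReal (2 * d * K * δ ^ α) * wSobolevNorm d 2 p α φ := by
        rw [Finset.sum_const, Finset.card_univ, Fintype.card_sum, Fintype.card_fin, nsmul_eq_mul,
          ← mul_assoc, ← ENNReal.ofReal_natCast, ← ENNReal.ofReal_mul (by positivity)]
        congr 2
        push_cast
        ring

end LocalizedOperator

theorem stmt6_general (d : ℕ) (p : ℝ≥0∞) (hp : 1 ≤ p)
    (α : ℝ) (hα0 : 0 ≤ α) (hα1 : α ≤ 1) (x₀ : Esp d)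
    (ϑ : Esp d → ℝ) (hϑ : ContDiff ℝ 1 ϑ)
    (M L : ℝ) (hM : ∀ x, |ϑ x| ≤ M) (hL : ∀ x, ‖gradient ϑ x‖ ≤ L) :
    ∃ C : ℝ, 0 < C ∧ ∀ δ : ℝ, 0 < δ → δ ≤ 1 →
      ∀ φ : Esp d → ℝ, ContDiff ℝ (⊤ : ℕ∞) φ → HasCompactSupport φ →
        eLpNorm (fun x => locDiffOp d ϑ x₀ δ φ x - ϑ x₀ * laplacian d φ x) p volume ≤
          ENNReal.ofReal (C * δ ^ α) * wSobolevNorm d 2 p α φ := by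
  have hM0 : 0 ≤ M := (abs_nonneg _).trans (hM x₀)
  have hL0 : 0 ≤ L := (norm_nonneg _).trans (hL x₀)
  refine ⟨2 * d * ((2 * M) ^ (1 - α) * L ^ α + L) + 1, by positivity,
    fun δ hδ0 hδ1 φ hφ _ => ?_⟩
  refine (eLpNorm_locDiffOp_sub_le hp hα0 hα1 x₀ (hϑ.differentiable one_ne_zero) hM hL hδ0 hδ1
    hφ).trans ?_
  gcongr
  linarith

/-- First-order expansion of the localized diffusion operator:
`‖Δ_{ϑ,δ}φ − ϑ(x₀)Δφ‖_{L^p} ≤ C δ^α ‖φ‖_{W̄^{2,p}_α}`. -/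
theorem stmt6 (d : ℕ) (hd : 1 ≤ d) (p : ℝ≥0∞) (hp : 1 ≤ p)
    (α : ℝ) (hα0 : 0 ≤ α) (hα1 : α ≤ 1) (x₀ : Esp d)
    (ϑ : Esp d → ℝ) (hϑ : ContDiff ℝ 1 ϑ)
    (M L : ℝ) (hM : ∀ x, |ϑ x| ≤ M) (hL : ∀ x, ‖gradient ϑ x‖ ≤ L) :
    ∃ C : ℝ, 0 < C ∧ ∀ δ : ℝ, 0 < δ → δ ≤ 1 →
      ∀ φ : Esp d → ℝ, ContDiff ℝ (⊤ : ℕ∞) φ → HasCompactSupport φ →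
        eLpNorm (fun x => locDiffOp d ϑ x₀ δ φ x - ϑ x₀ * laplacian d φ x) p volume ≤
          ENNReal.ofReal (C * δ ^ α) * wSobolevNorm d 2 p α φ :=
  stmt6_general d p hp α hα0 hα1 x₀ ϑ hϑ M L hM hL
end
end

section
/- Let d ≥ 1, b ∈ ℝ^d, ℓ ∈ ℕ, and let φ : ℝ^d → ℝ be smooth. Then for all x ∈ ℝ^d, ⟨b, x⟩ (Δ^{ℓ+1} φ)(x) + ⟨b, ∇(Δ^ℓ φ)(x)⟩ = Δ^ℓ( y ↦ ⟨b, y⟩ (Δφ)(y) + (1 − 2ℓ) ⟨b, ∇φ(y)⟩ )(x); that is, the operator φ ↦ ⟨b,x⟩Δφ + ⟨b,∇φ⟩ applied to Δ^ℓ φ is itself an ℓ-fold Laplacian of an explicit function built from φ. -/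
open MeasureTheory Real
open scoped ENNReal NNReal
noncomputable section

/-!
Write `∂_b f := Df(·) b`. The Laplacian commutes with `∂_b`, and the product rule gives
`Δ(⟨b,·⟩ g) = ⟨b,·⟩ Δg + 2 ∂_b g`. Hence one Laplacian turns `⟨b,·⟩ Δψ + c ∂_b ψ` into
`⟨b,·⟩ Δ(Δψ) + (c + 2) ∂_b (Δψ)`, the same expression for `Δψ` with `c` raised by `2`;
after `ℓ` steps the coefficient `1 - 2ℓ` has become `1`. Finally `⟨b, ∇f⟩ = ∂_b f`.
-/

section DirDeriv

variable {E : Type*} [NormedAddCommGroup E] [NormedSpace ℝ E]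

def dirDeriv (v : E) (f : E → ℝ) : E → ℝ := fun x => fderiv ℝ f x v

theorem ContDiff.dirDeriv {n : WithTop ℕ∞} {f : E → ℝ} (hf : ContDiff ℝ (n + 1) f) (v : E) :
    ContDiff ℝ n (dirDeriv v f) :=
  (hf.fderiv_right le_rfl).clm_apply contDiff_const

theorem dirDeriv_comm {f : E → ℝ} (hf : ContDiff ℝ 2 f) (v w : E) :
    dirDeriv v (dirDeriv w f) = dirDeriv w (dirDeriv v f) := by
  funext x
  have hdf : DifferentiableAt ℝ (fderiv ℝ f) x :=
    (hf.fderiv_right (m := 1) le_rfl).differentiable one_ne_zero x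
  have hsymm : IsSymmSndFDerivAt ℝ f x :=
    hf.contDiffAt.isSymmSndFDerivAt (by simp [minSmoothness_of_isRCLikeNormedField])
  change fderiv ℝ (fun y => fderiv ℝ f y w) x v = fderiv ℝ (fun y => fderiv ℝ f y v) x w
  rw [fderiv_clm_apply hdf (differentiableAt_const w),
    fderiv_clm_apply hdf (differentiableAt_const v)]
  simp [hsymm v w]

theorem dirDeriv_add_const_mul {f g : E → ℝ} (hf : Differentiable ℝ f) (hg : Differentiable ℝ g)
    (c : ℝ) (v : E) :
    dirDeriv v (fun y => f y + c * g y) = fun x => dirDeriv v f x + c * dirDeriv v g x := by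
  funext x
  simp [dirDeriv, fderiv_fun_add (hf x) ((hg x).const_mul c), fderiv_const_mul (hg x)]

theorem dirDeriv_sum {ι : Type*} {s : Finset ι} {f : ι → E → ℝ}
    (hf : ∀ i ∈ s, Differentiable ℝ (f i)) (v : E) :
    dirDeriv v (fun y => ∑ i ∈ s, f i y) = fun x => ∑ i ∈ s, dirDeriv v (f i) x := by
  funext x
  simp [dirDeriv, fderiv_fun_sum (fun i hi => hf i hi x)]

end DirDeriv

section Inner

variable {E : Type*} [NormedAddCommGroup E] [InnerProductSpace ℝ E]

theorem inner_gradient_eq_dirDeriv [CompleteSpace E] (b : E) (f : E → ℝ) (x : E) :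
    inner ℝ b (gradient f x) = dirDeriv b f x := by
  rw [real_inner_comm]
  exact InnerProductSpace.toDual_symm_apply

theorem dirDeriv_inner_mul {g : E → ℝ} (hg : Differentiable ℝ g) (b v : E) :
    dirDeriv v (fun y => inner ℝ b y * g y) =
      fun x => inner ℝ b x * dirDeriv v g x + inner ℝ b v * g x := by
  funext x
  have hb : HasFDerivAt (fun y => inner ℝ b y) (innerSL ℝ b) x := (innerSL ℝ b).hasFDerivAt
  rw [dirDeriv, fderiv_fun_mul hb.differentiableAt (hg x), hb.fderiv]
  simp only [add_apply, smul_apply, smul_eq_mul, innerSL_apply_apply, dirDeriv]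
  ring

end Inner

theorem pderiv_eq_dirDeriv {d : ℕ} (i : Fin d) (f : Esp d → ℝ) :
    pderiv d i f = dirDeriv (EuclideanSpace.single i 1) f := rfl

section Euclidean

variable {d : ℕ}

theorem laplacian_eq_sum_dirDeriv (f : Esp d → ℝ) :
    laplacian d f = fun x => ∑ i : Fin d,
      dirDeriv (EuclideanSpace.single i 1) (dirDeriv (EuclideanSpace.single i 1) f) x := rfl

theorem ContDiff.laplacian {n : WithTop ℕ∞} {f : Esp d → ℝ} (hf : ContDiff ℝ (n + 2) f) :
    ContDiff ℝ n (laplacian d f) := by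
  have hf' : ContDiff ℝ (n + 1 + 1) f := by rwa [add_assoc, one_add_one_eq_two]
  exact ContDiff.sum fun i _ => (hf'.dirDeriv _).dirDeriv _

theorem laplacian_add_const_mul {f g : Esp d → ℝ} (hf : ContDiff ℝ 2 f) (hg : ContDiff ℝ 2 g)
    (c : ℝ) :
    laplacian d (fun y => f y + c * g y) = fun x => laplacian d f x + c * laplacian d g x := by
  have hdiff {h : Esp d → ℝ} (hh : ContDiff ℝ 2 h) (v : Esp d) : Differentiable ℝ (dirDeriv v h) :=
    (hh.dirDeriv (n := 1) v).differentiable one_ne_zero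
  simp only [laplacian_eq_sum_dirDeriv,
    dirDeriv_add_const_mul (hf.differentiable two_ne_zero) (hg.differentiable two_ne_zero),
    dirDeriv_add_const_mul (hdiff hf _) (hdiff hg _), Finset.sum_add_distrib, Finset.mul_sum]

theorem laplacian_dirDeriv_comm {f : Esp d → ℝ} (hf : ContDiff ℝ 3 f) (b : Esp d) :
    laplacian d (dirDeriv b f) = dirDeriv b (laplacian d f) := by
  have hf2 : ContDiff ℝ 2 f := hf.of_le (by norm_num)
  have hf' (v : Esp d) : ContDiff ℝ 2 (dirDeriv v f) := hf.dirDeriv (n := 2) v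
  rw [laplacian_eq_sum_dirDeriv, laplacian_eq_sum_dirDeriv,
    dirDeriv_sum fun i _ => ((hf' _).dirDeriv (n := 1) _).differentiable one_ne_zero]
  simp only [dirDeriv_comm hf2 _ b, dirDeriv_comm (hf' _) _ b]

theorem dirDeriv_eq_sum_mul_pderiv (b : Esp d) (f : Esp d → ℝ) (x : Esp d) :
    dirDeriv b f x = ∑ i : Fin d, b i * pderiv d i f x := by
  conv_lhs => rw [← (EuclideanSpace.basisFun (Fin d) ℝ).sum_repr b]
  simp [dirDeriv, pderiv, map_sum]

theorem laplacian_inner_mul {g : Esp d → ℝ} (hg : ContDiff ℝ 2 g) (b : Esp d) :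
    laplacian d (fun y => inner ℝ b y * g y) =
      fun x => inner ℝ b x * laplacian d g x + 2 * dirDeriv b g x := by
  have hg1 : Differentiable ℝ g := hg.differentiable two_ne_zero
  have hdg (v : Esp d) : Differentiable ℝ (dirDeriv v g) :=
    (hg.dirDeriv (n := 1) v).differentiable one_ne_zero
  have hprod (v : Esp d) : Differentiable ℝ (fun y => inner ℝ b y * dirDeriv v g y) :=
    (innerSL ℝ b).differentiable.mul (hdg v)
  funext x
  simp only [laplacian_eq_sum_dirDeriv, dirDeriv_inner_mul hg1,
    dirDeriv_add_const_mul (hprod _) hg1, dirDeriv_inner_mul (hdg _),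
    dirDeriv_eq_sum_mul_pderiv b g x, EuclideanSpace.inner_single_right, conj_trivial, one_mul,
    pderiv_eq_dirDeriv, Finset.mul_sum, ← Finset.sum_add_distrib]
  exact Finset.sum_congr rfl fun i _ => by ring

theorem laplacian_inner_mul_laplacian_add {ψ : Esp d → ℝ} (hψ : ContDiff ℝ 4 ψ) (b : Esp d)
    (c : ℝ) :
    laplacian d (fun y => inner ℝ b y * laplacian d ψ y + c * dirDeriv b ψ y) =
      fun x => inner ℝ b x * laplacian d (laplacian d ψ) x
        + (c + 2) * dirDeriv b (laplacian d ψ) x := by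
  have hΔψ : ContDiff ℝ 2 (laplacian d ψ) := hψ.laplacian (n := 2)
  have hψ3 : ContDiff ℝ 3 ψ := hψ.of_le (by norm_num)
  have hprod : ContDiff ℝ 2 (fun y => inner ℝ b y * laplacian d ψ y) :=
    (innerSL ℝ b).contDiff.mul hΔψ
  rw [laplacian_add_const_mul hprod (hψ3.dirDeriv (n := 2) b),
    laplacian_inner_mul hΔψ, laplacian_dirDeriv_comm hψ3]
  funext x
  ring

theorem iterate_laplacian_inner_mul_laplacian_add (b : Esp d) (ℓ : ℕ) {ψ : Esp d → ℝ}
    (hψ : ContDiff ℝ (⊤ : ℕ∞) ψ) :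
    (laplacian d)^[ℓ] (fun y => inner ℝ b y * laplacian d ψ y
        + (1 - 2 * (ℓ : ℝ)) * dirDeriv b ψ y) =
      fun x => inner ℝ b x * (laplacian d)^[ℓ + 1] ψ x + dirDeriv b ((laplacian d)^[ℓ] ψ) x := by
  induction ℓ generalizing ψ with
  | zero => simp
  | succ n ih =>
    rw [Function.iterate_succ_apply, laplacian_inner_mul_laplacian_add (hψ.of_le ENat.LEInfty.out)]
    push_cast
    rw [show 1 - 2 * ((n : ℝ) + 1) + 2 = 1 - 2 * n by ring, ih (hψ.laplacian (n := (⊤ : ℕ∞)))]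
    simp only [Function.iterate_succ_apply]

end Euclidean

theorem stmt9_general (d : ℕ) (b : Esp d) (ℓ : ℕ)
    (φ : Esp d → ℝ) (hφ : ContDiff ℝ (⊤ : ℕ∞) φ) :
    ∀ x : Esp d,
      (inner ℝ b x : ℝ) * ((laplacian d)^[ℓ + 1] φ) x
          + (inner ℝ b (gradient ((laplacian d)^[ℓ] φ) x) : ℝ) =
        (laplacian d)^[ℓ]
          (fun y => (inner ℝ b y : ℝ) * laplacian d φ y
            + (1 - 2 * (ℓ : ℝ)) * (inner ℝ b (gradient φ y) : ℝ)) x := by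
  intro x
  simp only [inner_gradient_eq_dirDeriv, iterate_laplacian_inner_mul_laplacian_add b ℓ hφ]

/-- `⟨b,x⟩ Δ^{ℓ+1}φ + ⟨b, ∇(Δ^ℓ φ)⟩ = Δ^ℓ(⟨b,y⟩ Δφ + (1-2ℓ) ⟨b, ∇φ⟩)` for smooth `φ`. -/
theorem stmt9 (d : ℕ) (hd : 1 ≤ d) (b : Esp d) (ℓ : ℕ)
    (φ : Esp d → ℝ) (hφ : ContDiff ℝ (⊤ : ℕ∞) φ) :
    ∀ x : Esp d,
      (inner ℝ b x : ℝ) * ((laplacian d)^[ℓ + 1] φ) x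
          + (inner ℝ b (gradient ((laplacian d)^[ℓ] φ) x) : ℝ) =
        (laplacian d)^[ℓ]
          (fun y => (inner ℝ b y : ℝ) * laplacian d φ y
            + (1 - 2 * (ℓ : ℝ)) * (inner ℝ b (gradient φ y) : ℝ)) x :=
  stmt9_general d b ℓ φ hφ
end
end
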